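/- Let e(n) = deg B_n(t) be the degree of the n-th Stern polynomial. Then for every natural number n ≥ 1, 36·∑_{i=1}^{2^n} e(i) = (6n - 7)·2^{n+2} + 18n + 27 + (-1)^n. -/

import Mathlib

open Polynomial

/-- The Stern polynomials: `B 0 = 0`, `B 1 = 1`, `B (2n) = t * B n`,
`B (2n+1) = B n + B (n+1)`. -/
noncomputable def stern : ℕ → Polynomial ℤ
  | 0 => 0
  | 1 => 1
  | n + 2 =>
    if _h : n % 2 = 0 then
      X * stern (n / 2 + 1)
    else
      stern (n / 2 + 1) + stern (n / 2 + 2)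
  decreasing_by all_goals omega

/-- `e n` is the degree of the `n`-th Stern polynomial. -/
noncomputable def e (n : ℕ) : ℕ := (stern n).natDegree

/-!
Since the Stern polynomials have nonnegative coefficients, no cancellation occurs in
`B (2n+1) = B n + B (n+1)`, so `e (2n) = e n + 1` and `e (2n+1) = max (e n) (e (n+1))`;
it follows that consecutive values of `e` differ by at most one. Splitting a sum over `[0, 2m)`
into even and odd indices, `degSum m = ∑_{i<m} e i` and
`maxDegSum m = ∑_{i<m} max (e i) (e (i+1))` satisfy `degSum (2m) + 1 = degSum m + m + maxDegSum m`
and, by the bound on consecutive differences, `maxDegSum (2m) + 1 = degSum m + degSum (m+1) + 2m`.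
At `m = 2^n`, where `degSum (2^n + 1) = degSum (2^n) + n`, this is a linear recursion in `n`
solved by the closed form.
-/

section NonnegCoeffs

variable {R : Type*} [Semiring R] [PartialOrder R] [IsOrderedAddMonoid R] {p q : R[X]}

lemma natDegree_le_natDegree_add_of_coeff_nonneg (hp : ∀ k, 0 ≤ p.coeff k)
    (hq : ∀ k, 0 ≤ q.coeff k) : p.natDegree ≤ (p + q).natDegree := by
  rcases eq_or_ne p 0 with rfl | hp0
  · simp
  refine le_natDegree_of_ne_zero fun h => ?_
  rw [coeff_add] at h
  exact leadingCoeff_ne_zero.mpr hp0 ((add_eq_zero_iff_of_nonneg (hp _) (hq _)).mp h).1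

lemma natDegree_add_of_coeff_nonneg (hp : ∀ k, 0 ≤ p.coeff k) (hq : ∀ k, 0 ≤ q.coeff k) :
    (p + q).natDegree = max p.natDegree q.natDegree :=
  le_antisymm (natDegree_add_le p q) <| max_le
    (natDegree_le_natDegree_add_of_coeff_nonneg hp hq)
    (add_comm p q ▸ natDegree_le_natDegree_add_of_coeff_nonneg hq hp)

end NonnegCoeffs

@[simp] lemma stern_zero : stern 0 = 0 := by simp [stern]

@[simp] lemma stern_one : stern 1 = 1 := by simp [stern]

lemma stern_two_mul (n : ℕ) : stern (2 * n) = X * stern n := by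
  cases n with
  | zero => simp
  | succ k =>
    rw [show 2 * (k + 1) = 2 * k + 2 by ring, stern, dif_pos (by omega)]
    congr 2
    omega

lemma stern_two_mul_add_one (n : ℕ) : stern (2 * n + 1) = stern n + stern (n + 1) := by
  cases n with
  | zero => simp
  | succ k =>
    rw [show 2 * (k + 1) + 1 = (2 * k + 1) + 2 by ring, stern, dif_neg (by omega)]
    congr 2 <;> omega

lemma stern_coeff_nonneg (n k : ℕ) : 0 ≤ (stern n).coeff k := by
  induction n using Nat.strong_induction_on generalizing k with
  | _ n ih =>
    obtain ⟨m, rfl | rfl⟩ := Nat.even_or_odd' n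
    · rcases Nat.eq_zero_or_pos m with rfl | hm
      · simp
      rw [stern_two_mul]
      cases k with
      | zero => simp
      | succ k => rw [coeff_X_mul]; exact ih m (by omega) k
    · rcases Nat.eq_zero_or_pos m with rfl | hm
      · rw [stern_one, coeff_one]; split_ifs <;> norm_num
      rw [stern_two_mul_add_one, coeff_add]
      exact add_nonneg (ih m (by omega) k) (ih (m + 1) (by omega) k)

lemma stern_eval_one_pos {n : ℕ} (hn : 0 < n) : 0 < (stern n).eval 1 := by
  induction n using Nat.strong_induction_on with
  | _ n ih =>
    obtain ⟨m, rfl | rfl⟩ := Nat.even_or_odd' n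
    · rw [stern_two_mul, eval_mul, eval_X, one_mul]
      exact ih m (by omega) (by omega)
    · rcases Nat.eq_zero_or_pos m with rfl | hm
      · simp
      rw [stern_two_mul_add_one, eval_add]
      exact add_pos (ih m (by omega) hm) (ih (m + 1) (by omega) (by omega))

lemma stern_ne_zero {n : ℕ} (hn : 0 < n) : stern n ≠ 0 := fun h => by
  simpa [h] using stern_eval_one_pos hn

@[simp] lemma e_zero : e 0 = 0 := by simp [e]

@[simp] lemma e_one : e 1 = 0 := by simp [e]

lemma e_two_mul {n : ℕ} (hn : 0 < n) : e (2 * n) = e n + 1 := by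
  rw [e, e, stern_two_mul, natDegree_X_mul (stern_ne_zero hn)]

lemma e_two_mul_add_one (n : ℕ) : e (2 * n + 1) = max (e n) (e (n + 1)) := by
  rw [e, e, e, stern_two_mul_add_one,
    natDegree_add_of_coeff_nonneg (stern_coeff_nonneg n) (stern_coeff_nonneg (n + 1))]

@[simp] lemma e_two : e 2 = 1 := by simpa using e_two_mul (n := 1) one_pos

lemma e_two_pow (n : ℕ) : e (2 ^ n) = n := by
  induction n with
  | zero => exact e_one
  | succ n ih => rw [pow_succ', e_two_mul (Nat.two_pow_pos n), ih]

lemma e_succ_le_and_le_succ (n : ℕ) : e (n + 1) ≤ e n + 1 ∧ e n ≤ e (n + 1) + 1 := by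
  induction n using Nat.strong_induction_on with
  | _ n ih =>
    obtain ⟨m, rfl | rfl⟩ := Nat.even_or_odd' n
    · rcases Nat.eq_zero_or_pos m with rfl | hm
      · simp
      have := ih m (by omega)
      rw [e_two_mul hm, e_two_mul_add_one]
      omega
    · have := ih m (by omega)
      rw [show 2 * m + 1 + 1 = 2 * (m + 1) by ring, e_two_mul (by omega), e_two_mul_add_one]
      omega

noncomputable def degSum (m : ℕ) : ℕ := ∑ i ∈ Finset.range m, e i

noncomputable def maxDegSum (m : ℕ) : ℕ := ∑ i ∈ Finset.range m, max (e i) (e (i + 1))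

lemma degSum_succ (m : ℕ) : degSum (m + 1) = degSum m + e m := Finset.sum_range_succ _ _

lemma maxDegSum_succ (m : ℕ) : maxDegSum (m + 1) = maxDegSum m + max (e m) (e (m + 1)) :=
  Finset.sum_range_succ _ _

lemma sum_Icc_one_e (m : ℕ) : ∑ i ∈ Finset.Icc 1 m, e i = degSum (m + 1) := by
  rw [degSum, Finset.range_eq_Ico, Finset.sum_eq_sum_Ico_succ_bot m.add_one_pos, e_zero,
    zero_add, Finset.Ico_add_one_right_eq_Icc]

lemma degSum_two_mul {m : ℕ} (hm : 0 < m) : degSum (2 * m) + 1 = degSum m + m + maxDegSum m := by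
  induction m, hm using Nat.le_induction with
  | base => simp [degSum, Finset.sum_range_succ, maxDegSum]
  | succ m hm ih =>
    rw [show 2 * (m + 1) = 2 * m + 1 + 1 by ring, degSum_succ, degSum_succ, degSum_succ,
      maxDegSum_succ, e_two_mul hm, e_two_mul_add_one]
    omega

lemma maxDegSum_two_mul {m : ℕ} (hm : 0 < m) :
    maxDegSum (2 * m) + 1 = degSum m + degSum (m + 1) + 2 * m := by
  induction m, hm using Nat.le_induction with
  | base => simp [degSum, Finset.sum_range_succ, maxDegSum]
  | succ m hm ih =>
    have hstep := e_succ_le_and_le_succ m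
    have hsucc := degSum_succ m
    rw [show 2 * (m + 1) = 2 * m + 1 + 1 by ring, maxDegSum_succ, maxDegSum_succ,
      degSum_succ (m + 1), show 2 * m + 1 + 1 = 2 * (m + 1) by ring, e_two_mul hm,
      e_two_mul_add_one, e_two_mul (by omega)]
    omega

lemma degSum_two_pow_and_maxDegSum_two_pow (n : ℕ) :
    36 * (degSum (2 ^ n) : ℤ) = (6 * n - 7) * 2 ^ (n + 2) - 18 * n + 27 + (-1) ^ n ∧
    36 * (maxDegSum (2 ^ n) : ℤ) = (6 * n - 4) * 2 ^ (n + 2) - 2 * (-1) ^ n + 18 := by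
  induction n with
  | zero => simp [degSum, maxDegSum]
  | succ n ih =>
    have hpos := Nat.two_pow_pos n
    have hd : degSum (2 ^ (n + 1)) + 1 = degSum (2 ^ n) + 2 ^ n + maxDegSum (2 ^ n) := by
      rw [pow_succ', degSum_two_mul hpos]
    have hm : maxDegSum (2 ^ (n + 1)) + 1 = 2 * degSum (2 ^ n) + n + 2 ^ (n + 1) := by
      rw [pow_succ', maxDegSum_two_mul hpos, degSum_succ, e_two_pow]; ring
    zify at hd hm
    push_cast
    exact ⟨by linear_combination 36 * hd + ih.1 + ih.2, by linear_combination 36 * hm + 2 * ih.1⟩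

theorem stern_degree_sum_general (n : ℕ) :
    (36 : ℤ) * ∑ i ∈ Finset.Icc 1 (2 ^ n), (e i : ℤ) =
      (6 * n - 7) * 2 ^ (n + 2) + 18 * n + 27 + (-1) ^ n := by
  rw [← Nat.cast_sum, sum_Icc_one_e, degSum_succ, e_two_pow]
  push_cast
  linear_combination (degSum_two_pow_and_maxDegSum_two_pow n).1

theorem stern_degree_sum (n : ℕ) (hn : 1 ≤ n) :
    (36 : ℤ) * ∑ i ∈ Finset.Icc 1 (2 ^ n), (e i : ℤ) =
      (6 * n - 7) * 2 ^ (n + 2) + 18 * n + 27 + (-1) ^ n :=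
  stern_degree_sum_general n
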